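/- Let V be a finite-dimensional real inner product space and φ an alternating p-form on V. If ξ = (e₁,…,e_p) is a φ-critical orthonormal p-tuple, then λ_φ(A)(e₁,…,e_p) = (tr_ξ A)·φ(e₁,…,e_p) for every linear endomorphism A of V. (Proposition A.2) -/
import Mathlib

open scoped RealInnerProductSpace

noncomputable section

variable {V : Type*} [NormedAddCommGroup V] [InnerProductSpace ℝ V] [FiniteDimensional ℝ V]

/-- `λ_φ(A)`, the action of the endomorphism `A` on the alternating `p`-form `φ` as a
derivation: `λ_φ(A)(v₁,…,v_p) = Σ_k φ(v₁,…,A v_k,…,v_p)`. -/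
def lambdaForm {p : ℕ} (φ : V [⋀^Fin p]→ₗ[ℝ] ℝ) (A : V →ₗ[ℝ] V) (v : Fin p → V) : ℝ :=
  ∑ k, φ (Function.update v k (A (v k)))

/-- An orthonormal `p`-tuple `ξ = (e₁,…,e_p)` is `φ`-critical if `φ` vanishes on all the
first cousins of `ξ`, i.e. `φ(e₁,…,e_{k−1}, b, e_{k+1},…,e_p) = 0` for every index `k`
and every `b` orthogonal to `span{e₁,…,e_p}`. -/
def IsPhiCritical {p : ℕ} (φ : V [⋀^Fin p]→ₗ[ℝ] ℝ) (e : Fin p → V) : Prop :=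
  ∀ (k : Fin p) (b : V), b ∈ (Submodule.span ℝ (Set.range e))ᗮ →
    φ (Function.update e k b) = 0

/-- Proposition A.2: if `ξ = (e₁,…,e_p)` is a `φ`-critical orthonormal `p`-tuple, then
`λ_φ(A)(ξ) = (tr_ξ A)·φ(ξ)` for every endomorphism `A` of `V`. -/
theorem lambdaForm_eq_trace_mul_of_critical {p : ℕ} (hp : 1 ≤ p)
    (φ : V [⋀^Fin p]→ₗ[ℝ] ℝ)
    (e : Fin p → V) (he : Orthonormal ℝ e) (hcrit : IsPhiCritical φ e)
    (A : V →ₗ[ℝ] V) :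
    lambdaForm φ A e = (∑ j, ⟪e j, A (e j)⟫) * φ e := by
  classical
  have key : ∀ k : Fin p, φ (Function.update e k (A (e k))) = ⟪e k, A (e k)⟫ * φ e := by
    intro k
    set v := A (e k) with hv
    set b := v - ∑ j, ⟪e j, v⟫ • e j with hb
    have hbmem : b ∈ (Submodule.span ℝ (Set.range e))ᗮ := by
      rw [Submodule.mem_orthogonal]
      intro u hu
      induction hu using Submodule.span_induction with
      | mem x hx =>
        obtain ⟨i, rfl⟩ := hx
        rw [hb, inner_sub_right, he.inner_right_fintype, sub_self]
      | zero => simp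
      | add x y _ _ hx hy => rw [inner_add_left, hx, hy, add_zero]
      | smul c x _ hx => rw [inner_smul_left, hx, mul_zero]
    have hsplit : v = (∑ j, ⟪e j, v⟫ • e j) + b := by rw [hb]; abel
    conv_lhs => rw [hsplit, AlternatingMap.map_update_add, hcrit k b hbmem, add_zero,
      AlternatingMap.map_update_sum]
    rw [Finset.sum_eq_single k]
    · rw [AlternatingMap.map_update_smul, Function.update_eq_self, smul_eq_mul]
    · intro j _ hj
      rw [AlternatingMap.map_update_smul,
        φ.map_eq_zero_of_eq (Function.update e k (e j)) (i := j) (j := k)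
          (by simp [Function.update_of_ne hj]) hj, smul_zero]
    · simp
  rw [lambdaForm, Finset.sum_congr rfl fun k _ => key k, ← Finset.sum_mul]
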